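/- arXiv:0901.1378 — 3 statements merged into one kernel-verified Lean document; each statement's English description precedes it below -/
import Mathlib

section
/- Drift bound for the swap kernel (key inequality in the proof of Lemma 4.1). For every probability measure ν on X and every x ∈ X, ∫ ν(dy) [ min(1, r(y)/r(x)) V(y) + (1 − min(1, r(y)/r(x))) V(x) ] ≤ (1 + δ) V(x), where δ := (κ⁻¹τ − 1)⁻¹ = κ/(τ − κ). Equivalently, ∫ ν(dy) T(y, x, V) ≤ (1 + δ) V(x). -/
open MeasureTheory Real

noncomputable section

/-- Equi-energy swap acceptance probability `min(1, r(y)/r(x))` with `r = exp(-τE)`. -/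
def accept {𝒳 : Type*} (τ : ℝ) (E : 𝒳 → ℝ) (y x : 𝒳) : ℝ :=
  min 1 (Real.exp (-τ * E y) / Real.exp (-τ * E x))

/-- Scalar key inequality: for `0 < κ < τ` and `d > 0`,
`exp(-τd) * (exp(κd) - 1) ≤ κ/(τ-κ)`. -/
lemma key_scalar (κ τ d : ℝ) (hκ : 0 < κ) (hκτ : κ < τ) (hd : 0 < d) :
    Real.exp (-τ * d) * (Real.exp (κ * d) - 1) ≤ κ / (τ - κ) := by
  have hs : 0 < τ - κ := by linarith
  -- exp(κd) - 1 ≤ κ d exp(κ d)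
  have h1 : Real.exp (κ * d) - 1 ≤ κ * d * Real.exp (κ * d) := by
    have := Real.add_one_le_exp (-(κ * d))
    have h2 : 1 - κ * d ≤ Real.exp (-(κ * d)) := by linarith
    have h3 : (1 - κ * d) * Real.exp (κ * d) ≤ Real.exp (-(κ * d)) * Real.exp (κ * d) :=
      mul_le_mul_of_nonneg_right h2 (Real.exp_nonneg _)
    rw [← Real.exp_add] at h3
    simp at h3
    nlinarith [Real.exp_pos (κ * d)]
  have hle : Real.exp (-τ * d) * (Real.exp (κ * d) - 1)
      ≤ κ * d * Real.exp (-(τ - κ) * d) := by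
    have := mul_le_mul_of_nonneg_left h1 (Real.exp_nonneg (-τ * d))
    calc Real.exp (-τ * d) * (Real.exp (κ * d) - 1)
        ≤ Real.exp (-τ * d) * (κ * d * Real.exp (κ * d)) := this
      _ = κ * d * (Real.exp (-τ * d) * Real.exp (κ * d)) := by ring
      _ = κ * d * Real.exp (-(τ - κ) * d) := by rw [← Real.exp_add]; ring_nf
  -- d * exp(-(τ-κ) d) ≤ 1/(τ-κ)
  have h4 : (τ - κ) * d ≤ Real.exp ((τ - κ) * d) := by
    have := Real.add_one_le_exp ((τ - κ) * d); linarith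
  have h5 : d * Real.exp (-(τ - κ) * d) ≤ 1 / (τ - κ) := by
    have hE := Real.exp_pos ((τ - κ) * d)
    rw [neg_mul, Real.exp_neg, inv_eq_one_div, mul_one_div, div_le_div_iff₀ hE hs]
    nlinarith
  calc Real.exp (-τ * d) * (Real.exp (κ * d) - 1)
      ≤ κ * d * Real.exp (-(τ - κ) * d) := hle
    _ = κ * (d * Real.exp (-(τ - κ) * d)) := by ring
    _ ≤ κ * (1 / (τ - κ)) := mul_le_mul_of_nonneg_left h5 hκ.le
    _ = κ / (τ - κ) := by ring

/-- **Drift bound for the swap kernel** (key inequality in the proof of Lemma 4.1):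
for every probability measure `ν` and every `x`,
`∫ ν(dy) [min(1, r(y)/r(x)) V(y) + (1 − min(1, r(y)/r(x))) V(x)] ≤ (1 + δ) V(x)`
where `δ = κ/(τ − κ)`, i.e. `∫ ν(dy) T(y, x, V) ≤ (1 + δ) V(x)`. -/
theorem swap_kernel_drift_bound
    {𝒳 : Type*} [MeasurableSpace 𝒳] [TopologicalSpace 𝒳] [PolishSpace 𝒳] [BorelSpace 𝒳]
    (E : 𝒳 → ℝ) (hEcont : Continuous E) (hEbdd : BddBelow (Set.range E))
    (t t' τ : ℝ) (ht : 0 < t) (htt' : t < t') (hτ : τ = 1 / t - 1 / t')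
    (c κ : ℝ) (hc : 0 < c) (hκpos : 0 < κ) (hκ1 : κ < 1) (hκτ : κ < τ)
    (V : 𝒳 → ℝ) (hV : ∀ x, V x = c * Real.exp (κ * E x))
    (ν : Measure 𝒳) [IsProbabilityMeasure ν] (x : 𝒳) :
    ∫ y, (accept τ E y x * V y + (1 - accept τ E y x) * V x) ∂ν
      ≤ (1 + κ / (τ - κ)) * V x := by
  have hs : 0 < τ - κ := by linarith
  have hδ : 0 ≤ κ / (τ - κ) := div_nonneg hκpos.le hs.le
  have hVx : 0 < V x := by rw [hV]; positivity
  have hbound : ∀ y, accept τ E y x * V y + (1 - accept τ E y x) * V x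
      ≤ (1 + κ / (τ - κ)) * V x := by
    intro y
    have hacc : accept τ E y x = min 1 (Real.exp (-τ * (E y - E x))) := by
      unfold accept
      rw [← Real.exp_sub]
      ring_nf
    rcases le_or_gt (E y) (E x) with h | h
    · have h1 : (1:ℝ) ≤ Real.exp (-τ * (E y - E x)) := by
        rw [← Real.exp_zero]
        apply Real.exp_le_exp.2
        nlinarith
      have : accept τ E y x = 1 := by rw [hacc, min_eq_left h1]
      rw [this]
      have hVy : V y ≤ V x := by
        rw [hV, hV]
        have : Real.exp (κ * E y) ≤ Real.exp (κ * E x) :=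
          Real.exp_le_exp.2 (by nlinarith)
        nlinarith
      nlinarith
    · set d := E y - E x with hd
      have hdpos : 0 < d := by simp [hd]; linarith
      have h1 : Real.exp (-τ * d) ≤ 1 := by
        rw [← Real.exp_zero]
        apply Real.exp_le_exp.2
        nlinarith
      have haccd : accept τ E y x = Real.exp (-τ * d) := by
        rw [hacc, min_eq_right h1]
      rw [haccd]
      have hVy : V y = V x * Real.exp (κ * d) := by
        rw [hV, hV, mul_assoc, ← Real.exp_add]
        congr 1
        simp [hd]; ring
      rw [hVy]
      have hkey := key_scalar κ τ d hκpos hκτ hdpos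
      have := mul_le_mul_of_nonneg_right hkey hVx.le
      nlinarith
  by_cases hint : Integrable (fun y => accept τ E y x * V y + (1 - accept τ E y x) * V x) ν
  · calc ∫ y, (accept τ E y x * V y + (1 - accept τ E y x) * V x) ∂ν
        ≤ ∫ _, (1 + κ / (τ - κ)) * V x ∂ν :=
          integral_mono hint (integrable_const _) hbound
      _ = (1 + κ / (τ - κ)) * V x := by simp
  · rw [integral_undef hint]
    positivity
end
end

section
/- Generalized convergence lemma for varying measures and varying integrands (Lemma 4.8). Let (X, B) be a measurable space, let μ, μ₁, μ₂, … be probability measures on (X, B) such that μ_n(A) → μ(A) for every A ∈ B, and let f, f₁, f₂, … be measurable real-valued functions on X such that f_n(x) → f(x) for every x ∈ X. Let V : X → (0, ∞) be measurable with sup_n sup_x |f_n(x)|/V(x) < ∞, μ(V) < ∞, and sup_n μ_n(V^α) < ∞ for some α > 1. Then lim_{n→∞} ∫ f_n dμ_n = ∫ f dμ. -/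
open MeasureTheory Filter Topology
open scoped ENNReal

/-!
Fatou's lemma survives setwise convergence of the measures: approximating a measurable `g ≥ 0`
from below by simple functions gives `∫⁻ g dμ ≤ liminf ∫⁻ g dμₙ`, and the usual `⨅ k ≥ n`
argument extends this to varying integrands. Applied to `g + fₙ` and `g - fₙ` it yields dominated
convergence for any dominating function `g` with `μₙ(g) → μ(g)`. The bound on `μₙ(V^α)` makes `V`
uniformly integrable, since `V ≤ min V K + K^(1-α) V^α`, so `μₙ(V) → μ(V)` and `g = M V` qualifies.
-/

theorem le_min_add_rpow_mul_rpow {v K α : ℝ} (hv : 0 ≤ v) (hK : 0 < K) (hα : 1 ≤ α) :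
    v ≤ min v K + K ^ (1 - α) * v ^ α := by
  rcases le_total v K with hvK | hKv
  · rw [min_eq_left hvK]
    have := mul_nonneg (Real.rpow_nonneg hK.le (1 - α)) (Real.rpow_nonneg hv α)
    linarith
  · have hv_pos : 0 < v := hK.trans_le hKv
    have hrpow : v ^ (1 - α) ≤ K ^ (1 - α) := Real.rpow_le_rpow_of_nonpos hK hKv (by linarith)
    calc v = v ^ (1 - α) * v ^ α := by
          rw [← Real.rpow_add hv_pos, sub_add_cancel, Real.rpow_one]
      _ ≤ K ^ (1 - α) * v ^ α := by gcongr
      _ ≤ min v K + K ^ (1 - α) * v ^ α := by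
          rw [min_eq_right hKv]
          linarith

namespace MeasureTheory

variable {X : Type*} [MeasurableSpace X]

def SetwiseTendsto (μs : ℕ → Measure X) (μ : Measure X) : Prop :=
  ∀ s, MeasurableSet s → Tendsto (fun n => μs n s) atTop (𝓝 (μ s))

variable {μ : Measure X} {μs : ℕ → Measure X}

theorem lintegral_le_liminf_lintegral_of_setwise (hμ : SetwiseTendsto μs μ) {g : X → ℝ≥0∞}
    (hg : Measurable g) : ∫⁻ x, g x ∂μ ≤ liminf (fun n => ∫⁻ x, g x ∂μs n) atTop := by
  rw [lintegral_eq_iSup_eapprox_lintegral hg]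
  refine iSup_le fun m => ?_
  set φ := SimpleFunc.eapprox g m
  have hφ_tendsto : Tendsto (fun n => φ.lintegral (μs n)) atTop (𝓝 (φ.lintegral μ)) := by
    refine tendsto_finsetSum _ fun y hy => ?_
    obtain ⟨x, rfl⟩ := SimpleFunc.mem_range.mp hy
    exact ENNReal.Tendsto.const_mul (hμ _ (φ.measurableSet_fiber _))
      (Or.inr (SimpleFunc.eapprox_lt_top g m x).ne)
  have hφ_le : ∀ n, φ.lintegral (μs n) ≤ ∫⁻ x, g x ∂μs n := fun n => by
    rw [← SimpleFunc.lintegral_eq_lintegral]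
    refine lintegral_mono fun x => ?_
    rw [← SimpleFunc.iSup_eapprox_apply hg x]
    exact le_iSup (fun k => SimpleFunc.eapprox g k x) m
  exact hφ_tendsto.liminf_eq.symm.trans_le (liminf_le_liminf (Eventually.of_forall hφ_le))

theorem lintegral_le_liminf_lintegral_of_setwise_of_tendsto (hμ : SetwiseTendsto μs μ)
    {h : ℕ → X → ℝ≥0∞} {H : X → ℝ≥0∞} (hmeas : ∀ n, Measurable (h n))
    (hlim : ∀ x, Tendsto (fun n => h n x) atTop (𝓝 (H x))) :
    ∫⁻ x, H x ∂μ ≤ liminf (fun n => ∫⁻ x, h n x ∂μs n) atTop := by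
  have hinf_meas : ∀ n, Measurable fun x => ⨅ k ≥ n, h k x := fun n =>
    Measurable.iInf fun k => Measurable.iInf fun _ => hmeas k
  have hinf_mono : Monotone fun n x => ⨅ k ≥ n, h k x := fun n m hnm x =>
    biInf_mono fun _ hk => hnm.trans hk
  calc ∫⁻ x, H x ∂μ = ∫⁻ x, ⨆ n, ⨅ k ≥ n, h k x ∂μ := by
        simp_rw [← liminf_eq_iSup_iInf_of_nat, (hlim _).liminf_eq]
    _ = ⨆ n, ∫⁻ x, ⨅ k ≥ n, h k x ∂μ := lintegral_iSup hinf_meas hinf_mono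
    _ ≤ liminf (fun n => ∫⁻ x, h n x ∂μs n) atTop := by
        refine iSup_le fun n => (lintegral_le_liminf_lintegral_of_setwise hμ (hinf_meas n)).trans ?_
        refine liminf_le_liminf ?_
        filter_upwards [eventually_ge_atTop n] with m hm
        exact lintegral_mono fun x => biInf_le _ hm

theorem eventually_lt_integral_of_setwise_of_tendsto (hμ : SetwiseTendsto μs μ)
    {h : ℕ → X → ℝ} {H : X → ℝ} (hmeas : ∀ n, Measurable (h n)) (hnonneg : ∀ n x, 0 ≤ h n x)
    (hint : ∀ n, Integrable (h n) (μs n)) (hlim : ∀ x, Tendsto (fun n => h n x) atTop (𝓝 (H x)))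
    {a : ℝ} (ha : a < ∫ x, H x ∂μ) : ∀ᶠ n in atTop, a < ∫ x, h n x ∂μs n := by
  rcases lt_or_ge a 0 with ha_neg | ha_nonneg
  · exact Eventually.of_forall fun n => ha_neg.trans_le (integral_nonneg (hnonneg n))
  have hH_nonneg : ∀ x, 0 ≤ H x := fun x => ge_of_tendsto' (hlim x) fun n => hnonneg n x
  have hH_meas : Measurable H := measurable_of_tendsto_metrizable hmeas (tendsto_pi_nhds.2 hlim)
  have hfatou : ENNReal.ofReal a < liminf (fun n => ∫⁻ x, ENNReal.ofReal (h n x) ∂μs n) atTop :=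
    calc ENNReal.ofReal a < ENNReal.ofReal (∫ x, H x ∂μ) :=
          ENNReal.ofReal_lt_ofReal_iff'.2 ⟨ha, ha_nonneg.trans_lt ha⟩
      _ ≤ ∫⁻ x, ENNReal.ofReal (H x) ∂μ := by
          rw [integral_eq_lintegral_of_nonneg_ae (Eventually.of_forall hH_nonneg)
            hH_meas.aestronglyMeasurable]
          exact ENNReal.ofReal_toReal_le
      _ ≤ _ := lintegral_le_liminf_lintegral_of_setwise_of_tendsto hμ
          (fun n => (hmeas n).ennreal_ofReal)
          (fun x => (ENNReal.continuous_ofReal.tendsto _).comp (hlim x))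
  filter_upwards [eventually_lt_of_lt_liminf hfatou] with n hn
  rw [← ofReal_integral_eq_lintegral_ofReal (hint n) (Eventually.of_forall (hnonneg n)),
    ENNReal.ofReal_lt_ofReal_iff'] at hn
  exact hn.1

theorem eventually_lt_integral_of_setwise_of_dominated (hμ : SetwiseTendsto μs μ)
    {f : X → ℝ} {fs : ℕ → X → ℝ} {g : X → ℝ} (hf_meas : Measurable f)
    (hfs_meas : ∀ n, Measurable (fs n)) (hlim : ∀ x, Tendsto (fun n => fs n x) atTop (𝓝 (f x)))
    (hg_meas : Measurable g) (hbound : ∀ n x, |fs n x| ≤ g x) (hg_int : ∀ n, Integrable g (μs n))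
    (hgμ : Integrable g μ)
    (hg_tendsto : Tendsto (fun n => ∫ x, g x ∂μs n) atTop (𝓝 (∫ x, g x ∂μ)))
    {a : ℝ} (ha : a < ∫ x, f x ∂μ) : ∀ᶠ n in atTop, a < ∫ x, fs n x ∂μs n := by
  have hf_bound : ∀ x, |f x| ≤ g x := fun x =>
    le_of_tendsto' (hlim x).abs fun n => hbound n x
  have hfs_int : ∀ n, Integrable (fs n) (μs n) := fun n =>
    (hg_int n).mono' (hfs_meas n).aestronglyMeasurable (Eventually.of_forall (hbound n))
  have hf_int : Integrable f μ :=
    hgμ.mono' hf_meas.aestronglyMeasurable (Eventually.of_forall hf_bound)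
  set ε := (∫ x, f x ∂μ - a) / 2 with hε
  have hsum : ∀ᶠ n in atTop,
      ∫ x, g x ∂μ + ∫ x, f x ∂μ - ε < ∫ x, g x ∂μs n + ∫ x, fs n x ∂μs n := by
    have := eventually_lt_integral_of_setwise_of_tendsto hμ
      (h := fun n x => g x + fs n x) (H := fun x => g x + f x)
      (fun n => hg_meas.add (hfs_meas n))
      (fun n x => by linarith [neg_le_of_abs_le (hbound n x)])
      (fun n => (hg_int n).add (hfs_int n)) (fun x => tendsto_const_nhds.add (hlim x))
      (a := ∫ x, g x ∂μ + ∫ x, f x ∂μ - ε) (by rw [integral_add hgμ hf_int]; linarith)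
    filter_upwards [this] with n hn
    rwa [integral_add (hg_int n) (hfs_int n)] at hn
  have hg_close : ∀ᶠ n in atTop, ∫ x, g x ∂μs n < ∫ x, g x ∂μ + ε :=
    hg_tendsto.eventually (gt_mem_nhds (by linarith))
  filter_upwards [hsum, hg_close] with n hn_sum hn_g
  linarith

theorem tendsto_integral_of_setwise_of_dominated (hμ : SetwiseTendsto μs μ)
    {f : X → ℝ} {fs : ℕ → X → ℝ} {g : X → ℝ} (hf_meas : Measurable f)
    (hfs_meas : ∀ n, Measurable (fs n)) (hlim : ∀ x, Tendsto (fun n => fs n x) atTop (𝓝 (f x)))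
    (hg_meas : Measurable g) (hbound : ∀ n x, |fs n x| ≤ g x) (hg_int : ∀ n, Integrable g (μs n))
    (hgμ : Integrable g μ)
    (hg_tendsto : Tendsto (fun n => ∫ x, g x ∂μs n) atTop (𝓝 (∫ x, g x ∂μ))) :
    Tendsto (fun n => ∫ x, fs n x ∂μs n) atTop (𝓝 (∫ x, f x ∂μ)) := by
  refine tendsto_order.2 ⟨fun a ha => eventually_lt_integral_of_setwise_of_dominated hμ hf_meas
    hfs_meas hlim hg_meas hbound hg_int hgμ hg_tendsto ha, fun b hb => ?_⟩
  have hneg := eventually_lt_integral_of_setwise_of_dominated hμ (f := fun x => -f x)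
    (fs := fun n x => -fs n x) hf_meas.neg
    (fun n => (hfs_meas n).neg) (fun x => (hlim x).neg) hg_meas
    (fun n x => (abs_neg (fs n x)).trans_le (hbound n x)) hg_int hgμ hg_tendsto
    (a := -b) (by rw [integral_neg]; linarith)
  filter_upwards [hneg] with n hn
  rw [integral_neg] at hn
  linarith

theorem tendsto_integral_of_setwise_of_bounded [IsFiniteMeasure μ] [∀ n, IsFiniteMeasure (μs n)]
    (hμ : SetwiseTendsto μs μ) {f : X → ℝ} {fs : ℕ → X → ℝ} (hf_meas : Measurable f)
    (hfs_meas : ∀ n, Measurable (fs n)) (hlim : ∀ x, Tendsto (fun n => fs n x) atTop (𝓝 (f x)))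
    {C : ℝ} (hbound : ∀ n x, |fs n x| ≤ C) :
    Tendsto (fun n => ∫ x, fs n x ∂μs n) atTop (𝓝 (∫ x, f x ∂μ)) := by
  refine tendsto_integral_of_setwise_of_dominated hμ hf_meas hfs_meas hlim measurable_const hbound
    (fun _ => integrable_const C) (integrable_const C) ?_
  simp only [integral_const, smul_eq_mul]
  exact ((ENNReal.tendsto_toReal (measure_ne_top μ _)).comp (hμ _ MeasurableSet.univ)).mul_const C

theorem integrable_of_integrable_rpow [IsFiniteMeasure μ] {V : X → ℝ}
    (hV_meas : AEStronglyMeasurable V μ) (hV_nonneg : ∀ x, 0 ≤ V x) {α : ℝ} (hα : 1 ≤ α)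
    (hVα : Integrable (fun x => V x ^ α) μ) : Integrable V μ := by
  refine ((integrable_const 1).add hVα).mono' hV_meas (Eventually.of_forall fun x => ?_)
  have := le_min_add_rpow_mul_rpow (hV_nonneg x) one_pos hα
  rw [Real.one_rpow, one_mul] at this
  show ‖V x‖ ≤ 1 + V x ^ α
  rw [Real.norm_of_nonneg (hV_nonneg x)]
  linarith [min_le_right (V x) 1]

theorem tendsto_integral_of_setwise_of_bounded_rpow [IsFiniteMeasure μ]
    [∀ n, IsFiniteMeasure (μs n)] (hμ : SetwiseTendsto μs μ) {V : X → ℝ} (hV_meas : Measurable V)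
    (hV_nonneg : ∀ x, 0 ≤ V x) (hVμ : Integrable V μ) {α C : ℝ} (hα : 1 < α)
    (hVα_int : ∀ n, Integrable (fun x => V x ^ α) (μs n))
    (hVα_le : ∀ n, ∫ x, V x ^ α ∂μs n ≤ C) :
    Tendsto (fun n => ∫ x, V x ∂μs n) atTop (𝓝 (∫ x, V x ∂μ)) := by
  have hV_int : ∀ n, Integrable V (μs n) := fun n =>
    integrable_of_integrable_rpow hV_meas.aestronglyMeasurable hV_nonneg hα.le (hVα_int n)
  refine tendsto_order.2 ⟨fun a ha => eventually_lt_integral_of_setwise_of_tendsto hμ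
    (fun _ => hV_meas) (fun _ => hV_nonneg) hV_int (fun _ => tendsto_const_nhds) ha,
    fun b hb => ?_⟩
  set ε := (b - ∫ x, V x ∂μ) / 2 with hε
  have hε_pos : 0 < ε := by linarith
  obtain ⟨K, hK_pos, hK_tail⟩ : ∃ K > 0, K ^ (1 - α) * C < ε := by
    have hK : Tendsto (fun K : ℝ => K ^ (1 - α) * C) atTop (𝓝 (0 * C)) := by
      rw [← neg_sub]
      exact (tendsto_rpow_neg_atTop (sub_pos.2 hα)).mul_const C
    rw [zero_mul] at hK
    exact ((eventually_gt_atTop 0).and (hK.eventually (gt_mem_nhds hε_pos))).exists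
  have hmin_int : ∀ ν : Measure X, Integrable V ν → Integrable (fun x => min (V x) K) ν :=
    fun ν hV => hV.mono' (hV_meas.min measurable_const).aestronglyMeasurable
      (Eventually.of_forall fun x => by
        rw [Real.norm_of_nonneg (le_min (hV_nonneg x) hK_pos.le)]
        exact min_le_left _ _)
  have hmin_tendsto := tendsto_integral_of_setwise_of_bounded hμ (hV_meas.min measurable_const)
    (fun _ => hV_meas.min measurable_const) (fun _ => tendsto_const_nhds)
    (fun _ x => abs_le.2 ⟨by linarith [le_min (hV_nonneg x) hK_pos.le], min_le_right _ K⟩)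
  filter_upwards [hmin_tendsto.eventually (gt_mem_nhds (lt_add_of_pos_right _ hε_pos))]
    with n hn
  calc ∫ x, V x ∂μs n ≤ ∫ x, min (V x) K + K ^ (1 - α) * V x ^ α ∂μs n :=
        integral_mono (hV_int n) ((hmin_int _ (hV_int n)).add ((hVα_int n).const_mul _))
          fun x => le_min_add_rpow_mul_rpow (hV_nonneg x) hK_pos hα.le
    _ = ∫ x, min (V x) K ∂μs n + K ^ (1 - α) * ∫ x, V x ^ α ∂μs n := by
        rw [integral_add (hmin_int _ (hV_int n)) ((hVα_int n).const_mul _), integral_const_mul]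
    _ ≤ ∫ x, min (V x) K ∂μs n + K ^ (1 - α) * C := by
        gcongr
        exact hVα_le n
    _ < ∫ x, min (V x) K ∂μ + ε + ε := add_lt_add hn hK_tail
    _ ≤ b := by linarith [integral_mono (hmin_int μ hVμ) hVμ fun x => min_le_left (V x) K]

end MeasureTheory

/-- **Generalized convergence lemma for varying measures and varying integrands** (Lemma 4.8):
if probability measures `μ_n` converge setwise to `μ`, measurable functions `f_n` converge
pointwise to `f`, `V : X → (0, ∞)` is measurable with `sup_n |f_n|_V < ∞`, `μ(V) < ∞` and
`sup_n μ_n(V^α) < ∞` for some `α > 1`, then `∫ f_n dμ_n → ∫ f dμ`. -/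
theorem integral_tendsto_of_setwise_convergence
    {X : Type*} [MeasurableSpace X]
    (μ : Measure X) (μs : ℕ → Measure X)
    [IsProbabilityMeasure μ] (hμs : ∀ n, IsProbabilityMeasure (μs n))
    (hsetwise : ∀ A : Set X, MeasurableSet A → Tendsto (fun n => μs n A) atTop (nhds (μ A)))
    (f : X → ℝ) (fs : ℕ → X → ℝ) (hfmeas : Measurable f) (hfsmeas : ∀ n, Measurable (fs n))
    (hfs : ∀ x, Tendsto (fun n => fs n x) atTop (nhds (f x)))
    (V : X → ℝ) (hVmeas : Measurable V) (hVpos : ∀ x, 0 < V x)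
    (hbound : ∃ M : ℝ, ∀ n x, |fs n x| ≤ M * V x)
    (hVμ : ∫⁻ x, ENNReal.ofReal (V x) ∂μ ≠ ⊤)
    (α : ℝ) (hα : 1 < α)
    (hVα : ∃ M : ℝ≥0∞, M ≠ ⊤ ∧ ∀ n, ∫⁻ x, ENNReal.ofReal (V x ^ α) ∂(μs n) ≤ M) :
    Tendsto (fun n => ∫ x, fs n x ∂(μs n)) atTop (nhds (∫ x, f x ∂μ)) := by
  obtain ⟨M, hM⟩ := hbound
  obtain ⟨Mα, hMα_ne_top, hMα⟩ := hVα
  have hV_nonneg : ∀ x, 0 ≤ V x := fun x => (hVpos x).le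
  have hVα_nonneg : ∀ x, 0 ≤ V x ^ α := fun x => Real.rpow_nonneg (hV_nonneg x) α
  have hVα_meas : Measurable fun x => V x ^ α := hVmeas.pow_const α
  have hVα_int : ∀ n, Integrable (fun x => V x ^ α) (μs n) := fun n =>
    (lintegral_ofReal_ne_top_iff_integrable hVα_meas.aestronglyMeasurable
      (.of_forall hVα_nonneg)).1 (ne_top_of_le_ne_top hMα_ne_top (hMα n))
  have hVα_le : ∀ n, ∫ x, V x ^ α ∂(μs n) ≤ Mα.toReal := fun n => by
    rw [integral_eq_lintegral_of_nonneg_ae (.of_forall hVα_nonneg) hVα_meas.aestronglyMeasurable]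
    exact ENNReal.toReal_mono hMα_ne_top (hMα n)
  have hV_int : Integrable V μ :=
    (lintegral_ofReal_ne_top_iff_integrable hVmeas.aestronglyMeasurable
      (.of_forall hV_nonneg)).1 hVμ
  have hV_int_n : ∀ n, Integrable V (μs n) := fun n =>
    integrable_of_integrable_rpow hVmeas.aestronglyMeasurable hV_nonneg hα.le (hVα_int n)
  refine tendsto_integral_of_setwise_of_dominated hsetwise hfmeas hfsmeas hfs
    (hVmeas.const_mul M) hM (fun n => (hV_int_n n).const_mul M) (hV_int.const_mul M) ?_
  simpa only [integral_const_mul] using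
    (tendsto_integral_of_setwise_of_bounded_rpow hsetwise hVmeas hV_nonneg hV_int hα hVα_int
      hVα_le).const_mul M
end

section
/- Convergence of unbounded integrals under setwise convergence (key step in the proof of Lemma 4.8). Let (X, B) be a measurable space, let μ, μ₁, μ₂, … be probability measures on (X, B) with μ_n(A) → μ(A) for every A ∈ B, and let V : X → (0, ∞) be measurable with μ(V) < ∞ and sup_n μ_n(V^α) < ∞ for some α > 1. Then lim_{n→∞} μ_n(V) = μ(V). -/
open MeasureTheory Filter Set
open scoped ENNReal

/-- Setwise convergence implies convergence of lintegrals of bounded nonnegative functions. -/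
lemma aux_trunc_tendsto
    {X : Type*} [MeasurableSpace X]
    (μ : Measure X) (μs : ℕ → Measure X)
    [IsProbabilityMeasure μ] (hμs : ∀ n, IsProbabilityMeasure (μs n))
    (hsetwise : ∀ A : Set X, MeasurableSet A → Tendsto (fun n => μs n A) atTop (nhds (μ A)))
    (W : X → ℝ) (hW : Measurable W) (hWnn : ∀ x, 0 ≤ W x) (C : ℝ) (hWC : ∀ x, W x ≤ C) :
    Tendsto (fun n => ∫⁻ x, ENNReal.ofReal (W x) ∂(μs n)) atTop
      (nhds (∫⁻ x, ENNReal.ofReal (W x) ∂μ)) := by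
  have layer : ∀ ν : Measure X, ∫⁻ x, ENNReal.ofReal (W x) ∂ν
      = ∫⁻ t in Ioi (0:ℝ), ν {a | t < W a} := fun ν =>
    lintegral_eq_lintegral_meas_lt ν (ae_of_all _ hWnn) hW.aemeasurable
  simp_rw [layer]
  apply tendsto_lintegral_of_dominated_convergence
    (bound := Set.indicator (Ioc (0:ℝ) C) (fun _ => 1))
  · intro n
    exact Antitone.measurable (fun s t hst => measure_mono (fun a ha => lt_of_le_of_lt hst ha))
  · intro n
    haveI := hμs n
    rw [Filter.EventuallyLE, ae_restrict_iff' measurableSet_Ioi]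
    refine ae_of_all _ (fun t ht => ?_)
    by_cases htC : t ≤ C
    · have : Set.indicator (Ioc (0:ℝ) C) (fun _ => (1:ℝ≥0∞)) t = 1 := by
        rw [Set.indicator_of_mem (Set.mem_Ioc.mpr ⟨ht, htC⟩)]
      rw [this]
      exact prob_le_one
    · have hempty : {a | t < W a} = ∅ := by
        ext a; simp only [Set.mem_setOf_eq, Set.mem_empty_iff_false, iff_false, not_lt]
        exact (hWC a).trans (le_of_not_ge htC)
      rw [hempty]
      simp
  · refine ne_of_lt (lt_of_le_of_lt (lintegral_mono' Measure.restrict_le_self le_rfl :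
      ∫⁻ t in Ioi (0:ℝ), (Ioc (0:ℝ) C).indicator (fun _ => (1:ℝ≥0∞)) t
        ≤ ∫⁻ t, (Ioc (0:ℝ) C).indicator (fun _ => (1:ℝ≥0∞)) t) ?_)
    rw [lintegral_indicator measurableSet_Ioc, setLIntegral_one]
    exact measure_Ioc_lt_top
  · refine ae_of_all _ (fun t => ?_)
    exact hsetwise _ (hW measurableSet_Ioi)

/-- **Convergence of unbounded integrals under setwise convergence** (key step in the proof of
Lemma 4.8): if probability measures `μ_n` converge setwise to `μ`, `V : X → (0, ∞)` is
measurable with `μ(V) < ∞` and `sup_n μ_n(V^α) < ∞` for some `α > 1`, then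
`μ_n(V) → μ(V)`. -/
theorem lintegral_tendsto_of_setwise_convergence
    {X : Type*} [MeasurableSpace X]
    (μ : Measure X) (μs : ℕ → Measure X)
    [IsProbabilityMeasure μ] (hμs : ∀ n, IsProbabilityMeasure (μs n))
    (hsetwise : ∀ A : Set X, MeasurableSet A → Tendsto (fun n => μs n A) atTop (nhds (μ A)))
    (V : X → ℝ) (hVmeas : Measurable V) (hVpos : ∀ x, 0 < V x)
    (hVμ : ∫⁻ x, ENNReal.ofReal (V x) ∂μ ≠ ⊤)
    (α : ℝ) (hα : 1 < α)
    (hVα : ∃ M : ℝ≥0∞, M ≠ ⊤ ∧ ∀ n, ∫⁻ x, ENNReal.ofReal (V x ^ α) ∂(μs n) ≤ M) :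
    Tendsto (fun n => ∫⁻ x, ENNReal.ofReal (V x) ∂(μs n)) atTop
      (nhds (∫⁻ x, ENNReal.ofReal (V x) ∂μ)) := by
  obtain ⟨M, hM, hMbound⟩ := hVα
  set I : ℝ≥0∞ := ∫⁻ x, ENNReal.ofReal (V x) ∂μ with hI
  set T : ℕ → ℝ≥0∞ := fun N => ∫⁻ x, ENNReal.ofReal (min (V x) N) ∂μ with hT
  have hminmeas : ∀ N : ℕ, Measurable fun x => ENNReal.ofReal (min (V x) N) :=
    fun N => (hVmeas.min measurable_const).ennreal_ofReal
  have hTmono : Monotone T := by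
    intro a b hab
    exact lintegral_mono fun x => ENNReal.ofReal_le_ofReal
      (min_le_min le_rfl (by exact_mod_cast hab))
  have hTleI : ∀ N, T N ≤ I :=
    fun N => lintegral_mono fun x => ENNReal.ofReal_le_ofReal (min_le_left _ _)
  have hTtendsto : Tendsto T atTop (nhds I) := by
    have hsup : (⨆ N : ℕ, T N) = I := by
      rw [hT, ← lintegral_iSup hminmeas]
      · apply lintegral_congr (fun x => ?_)
        apply le_antisymm
        · exact iSup_le fun N => ENNReal.ofReal_le_ofReal (min_le_left _ _)
        · obtain ⟨N, hN⟩ := exists_nat_ge (V x)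
          refine le_iSup_of_le N (le_of_eq ?_)
          rw [min_eq_left hN]
      · intro a b hab x
        exact ENNReal.ofReal_le_ofReal (min_le_min le_rfl (by exact_mod_cast hab))
    rw [← hsup]
    exact tendsto_atTop_iSup hTmono
  rw [ENNReal.tendsto_nhds hVμ]
  intro ε hε
  have hε3 : (0:ℝ≥0∞) < ε / 3 := ENNReal.div_pos hε.ne' (by norm_num)
  have hcoef : Tendsto (fun N : ℕ => M * (ENNReal.ofReal ((N:ℝ) ^ (α - 1)))⁻¹)
      atTop (nhds 0) := by
    have h1 : Tendsto (fun N : ℕ => ((N:ℝ) ^ (α - 1))) atTop atTop :=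
      (tendsto_rpow_atTop (by linarith)).comp tendsto_natCast_atTop_atTop
    have h2 : Tendsto (fun N : ℕ => ENNReal.ofReal ((N:ℝ) ^ (α - 1))) atTop (nhds ⊤) :=
      ENNReal.tendsto_ofReal_atTop.comp h1
    have h3 : Tendsto (fun N : ℕ => (ENNReal.ofReal ((N:ℝ) ^ (α - 1)))⁻¹) atTop (nhds 0) := by
      have := (ENNReal.tendsto_inv_iff).mpr h2
      simpa using this
    have := ENNReal.Tendsto.const_mul h3 (Or.inr hM)
    simpa using this
  have hev : ∀ᶠ N : ℕ in atTop,
      (I ≤ T N + ε / 3) ∧ (M * (ENNReal.ofReal ((N:ℝ) ^ (α - 1)))⁻¹ ≤ ε / 3) ∧ 1 ≤ N := by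
    have e1 : ∀ᶠ N : ℕ in atTop, I ≤ T N + ε / 3 := by
      filter_upwards [(ENNReal.tendsto_nhds hVμ).mp hTtendsto (ε/3) hε3] with N hN
      exact tsub_le_iff_right.mp hN.1
    have e2 : ∀ᶠ N : ℕ in atTop, M * (ENNReal.ofReal ((N:ℝ) ^ (α - 1)))⁻¹ ≤ ε / 3 :=
      hcoef.eventually_le_const hε3
    filter_upwards [e1, e2, eventually_ge_atTop 1] with N h1 h2 h3
    exact ⟨h1, h2, h3⟩
  obtain ⟨N, hN1, hN2, hN3⟩ := hev.exists
  set c : ℝ≥0∞ := ENNReal.ofReal ((N:ℝ) ^ (α - 1)) with hc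
  have hNpos : (0:ℝ) < N := by exact_mod_cast Nat.lt_of_lt_of_le Nat.zero_lt_one hN3
  have hcpos : (0:ℝ) < (N:ℝ) ^ (α - 1) := Real.rpow_pos_of_pos hNpos _
  have hc0 : c ≠ 0 := (ENNReal.ofReal_pos.mpr hcpos).ne'
  have hctop : c ≠ ⊤ := ENNReal.ofReal_ne_top
  -- pointwise tail domination
  have hpt : ∀ x : X, ENNReal.ofReal (V x)
      ≤ ENNReal.ofReal (min (V x) N) + ENNReal.ofReal (V x ^ α) * c⁻¹ := by
    intro x
    by_cases h : V x ≤ N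
    · rw [min_eq_left h]; exact le_add_right le_rfl
    · push_neg at h
      refine le_add_left ?_
      rw [← div_eq_mul_inv, ENNReal.le_div_iff_mul_le (Or.inl hc0) (Or.inl hctop), hc,
        ← ENNReal.ofReal_mul (hVpos x).le]
      apply ENNReal.ofReal_le_ofReal
      have hexp : V x ^ α = V x * V x ^ (α - 1) := by
        have := Real.rpow_add (hVpos x) 1 (α - 1)
        simp only [Real.rpow_one] at this
        calc V x ^ α = V x ^ (1 + (α - 1)) := by ring_nf
          _ = V x * V x ^ (α - 1) := this
      rw [hexp]
      exact mul_le_mul_of_nonneg_left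
        (Real.rpow_le_rpow (le_of_lt hNpos) h.le (by linarith)) (hVpos x).le
  -- tail integral bound
  have hVαmeas : Measurable fun x => ENNReal.ofReal (V x ^ α) :=
    (((Real.continuous_rpow_const (le_of_lt (lt_trans zero_lt_one hα))).measurable.comp
      hVmeas)).ennreal_ofReal
  have htail : ∀ n, ∫⁻ x, ENNReal.ofReal (V x) ∂(μs n)
      ≤ (∫⁻ x, ENNReal.ofReal (min (V x) N) ∂(μs n)) + ε / 3 := by
    intro n
    calc ∫⁻ x, ENNReal.ofReal (V x) ∂(μs n)
        ≤ ∫⁻ x, (ENNReal.ofReal (min (V x) N) + ENNReal.ofReal (V x ^ α) * c⁻¹) ∂(μs n) :=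
          lintegral_mono hpt
      _ = (∫⁻ x, ENNReal.ofReal (min (V x) N) ∂(μs n))
          + (∫⁻ x, ENNReal.ofReal (V x ^ α) ∂(μs n)) * c⁻¹ := by
          rw [lintegral_add_left (hminmeas N), lintegral_mul_const _ hVαmeas]
      _ ≤ (∫⁻ x, ENNReal.ofReal (min (V x) N) ∂(μs n)) + M * c⁻¹ :=
          add_le_add le_rfl (mul_le_mul_left (hMbound n) _)
      _ ≤ (∫⁻ x, ENNReal.ofReal (min (V x) N) ∂(μs n)) + ε / 3 :=
          add_le_add le_rfl hN2
  -- convergence of truncated integrals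
  have htrunc := aux_trunc_tendsto μ μs hμs hsetwise (fun x => min (V x) N)
    (hVmeas.min measurable_const)
    (fun x => le_min (hVpos x).le (Nat.cast_nonneg N)) N (fun x => min_le_right _ _)
  have hTNne : T N ≠ ⊤ := ne_top_of_le_ne_top hVμ (hTleI N)
  have hev2 := (ENNReal.tendsto_nhds hTNne).mp htrunc (ε/3) hε3
  filter_upwards [hev2] with n hn
  have hSn_le : (∫⁻ x, ENNReal.ofReal (min (V x) N) ∂(μs n))
      ≤ ∫⁻ x, ENNReal.ofReal (V x) ∂(μs n) :=
    lintegral_mono fun x => ENNReal.ofReal_le_ofReal (min_le_left _ _)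
  have h13 : ε / 3 + ε / 3 ≤ ε := by
    calc ε / 3 + ε / 3 ≤ ε / 3 + ε / 3 + ε / 3 := le_add_right le_rfl
      _ = ε := ENNReal.add_thirds ε
  constructor
  · rw [tsub_le_iff_right]
    calc I ≤ T N + ε / 3 := hN1
      _ ≤ ((∫⁻ x, ENNReal.ofReal (min (V x) N) ∂(μs n)) + ε / 3) + ε / 3 :=
        add_le_add (tsub_le_iff_right.mp hn.1) le_rfl
      _ ≤ ((∫⁻ x, ENNReal.ofReal (V x) ∂(μs n)) + ε / 3) + ε / 3 :=
        add_le_add (add_le_add hSn_le le_rfl) le_rfl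
      _ = (∫⁻ x, ENNReal.ofReal (V x) ∂(μs n)) + (ε / 3 + ε / 3) := by ring
      _ ≤ (∫⁻ x, ENNReal.ofReal (V x) ∂(μs n)) + ε := add_le_add le_rfl h13
  · calc ∫⁻ x, ENNReal.ofReal (V x) ∂(μs n)
        ≤ (∫⁻ x, ENNReal.ofReal (min (V x) N) ∂(μs n)) + ε / 3 := htail n
      _ ≤ (T N + ε / 3) + ε / 3 := add_le_add hn.2 le_rfl
      _ ≤ (I + ε / 3) + ε / 3 := add_le_add (add_le_add (hTleI N) le_rfl) le_rfl
      _ = I + (ε / 3 + ε / 3) := by ring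
      _ ≤ I + ε := add_le_add le_rfl h13
end
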